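/- arXiv:1207.4669 — 4 statements merged into one kernel-verified Lean document; each statement's English description precedes it below -/
import Mathlib

section
/- If f : A → B is a ring epimorphism with Tor_1^A(B, B) = 0, then Tor_1^A(B, coker(f)) = 0. -/
/-!
`Tor₁^A(N, M)` vanishes exactly when `N ⊗ K → N ⊗ P` is injective, for any presentation
`0 → K → P → M → 0` with `P` projective: splice `P` onto a projective resolution of `K`.
Present both `B` and `B / f(A)` by the free module `F = B →₀ A`. The kernel `K'` of
`F → B / f(A)` contains the kernel `K` of `F → B`, with `K' / K ≅ f(A)`, so a diagram chase makes
`B ⊗ K' → B ⊗ F` injective once `B ⊗ K → B ⊗ F` is (this is `Tor₁(B, B) = 0`) and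
`B ⊗ f(A) → B ⊗ B` is; the latter holds because multiplication `B ⊗ f(A) → B` is inverted by
`b ↦ b ⊗ 1`.
-/

open CategoryTheory CategoryTheory.Limits
open scoped TensorProduct

universe u

/-- A ring homomorphism is an epimorphism in the category of rings. -/
def IsRingEpi {A B : Type*} [Ring A] [Ring B] (f : A →+* B) : Prop :=
  ∀ (C : Type*) [Ring C] (g₁ g₂ : B →+* C), g₁.comp f = g₂.comp f → g₁ = g₂

namespace CategoryTheory

variable {C : Type*} [Category* C] [Abelian C]

lemma ShortComplex.Exact.precomp_f {S : ShortComplex C} (hS : S.Exact) {X : C} (e : X ⟶ S.X₁)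
    [Epi e] : (ShortComplex.mk (e ≫ S.f) S.g (by simp)).Exact :=
  (exact_iff_of_epi_of_isIso_of_mono (S₁ := ShortComplex.mk (e ≫ S.f) S.g (by simp)) (S₂ := S)
    { τ₁ := e, τ₂ := 𝟙 S.X₂, τ₃ := 𝟙 S.X₃ }).2 hS

lemma ShortComplex.Exact.postcomp_g {S : ShortComplex C} (hS : S.Exact) {X : C} (m : S.X₃ ⟶ X)
    [Mono m] : (ShortComplex.mk S.f (S.g ≫ m) (by simp)).Exact :=
  (exact_iff_of_epi_of_isIso_of_mono (S₁ := S) (S₂ := ShortComplex.mk S.f (S.g ≫ m) (by simp))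
    { τ₁ := 𝟙 S.X₁, τ₂ := 𝟙 S.X₂, τ₃ := m }).1 hS

noncomputable def ProjectiveResolution.ofShortExact {S : ShortComplex C} (hS : S.ShortExact)
    [Projective S.X₂] (R : ProjectiveResolution S.X₁) : ProjectiveResolution S.X₃ where
  complex := R.complex.augment (R.π.f 0 ≫ S.f)
    ((R.complex_d_comp_π_f_zero_assoc S.f).trans zero_comp)
  projective := by
    rintro (_ | n)
    · exact ‹Projective S.X₂›
    · exact R.projective n
  π := (ChainComplex.toSingle₀Equiv _ _).symm
    ⟨S.g, (Category.assoc _ _ _).trans ((R.π.f 0 ≫= S.zero).trans comp_zero)⟩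
  quasiIso := ⟨fun n => by
    -- `R.π.f 0` and `S.f` are typed through `((single₀ C).obj S.X₁).X 0`, which is `S.X₁` only up
    -- to unfolding, so their `Epi` / `Mono` instances are restated at the types needed below.
    rcases n with _ | _ | n
    · rw [ChainComplex.quasiIsoAt₀_iff, ShortComplex.quasiIso_iff_of_zeros']
      · have : Epi (X := R.complex.X 0) (Y := S.X₁) (R.π.f 0) := inferInstanceAs (Epi (R.π.f 0))
        refine (ShortComplex.exact_and_epi_g_iff_of_iso ?_).2
          ⟨hS.exact.precomp_f (R.π.f 0), hS.epi_g⟩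
        refine ShortComplex.isoMk (Iso.refl _) (Iso.refl _) (Iso.refl _)
          ((Category.id_comp _).trans (Category.comp_id _).symm)
          ((Category.id_comp S.g).trans (Eq.trans ?_ (Category.comp_id _).symm))
        exact (ChainComplex.toSingle₀Equiv_symm_apply_f_zero
          (C := R.complex.augment (R.π.f 0 ≫ S.f) _) S.g _).symm
      all_goals rfl
    · rw [quasiIsoAt_iff_exactAt' _ _ (ChainComplex.exactAt_succ_single_obj _ _),
        HomologicalComplex.exactAt_iff' _ 2 1 0 (by simp) (by simp)]
      have : Mono (X := ((ChainComplex.single₀ C).obj S.X₁).X 0) S.f := hS.mono_f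
      exact R.exact₀.postcomp_g S.f
    · rw [quasiIsoAt_iff_exactAt' _ _ (ChainComplex.exactAt_succ_single_obj _ _),
        HomologicalComplex.exactAt_iff' _ (n + 3) (n + 2) (n + 1) (by simp) (by simp)]
      have hR := R.complex_exactAt_succ n
      rwa [HomologicalComplex.exactAt_iff' _ (n + 2) (n + 1) n (by simp) (by simp)] at hR⟩

end CategoryTheory

namespace LinearMap

variable {R M N P Q : Type*} [CommRing R] [AddCommGroup M] [AddCommGroup N] [AddCommGroup P]
  [AddCommGroup Q] [Module R M] [Module R N] [Module R P] [Module R Q]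

theorem exact_comp_iff_injective {f : M →ₗ[R] N} {g : N →ₗ[R] P} (h : P →ₗ[R] Q)
    (hfg : Function.Exact f g) (hg : Function.Surjective g) :
    Function.Exact f (h ∘ₗ g) ↔ Function.Injective h := by
  refine ⟨fun hfhg => (injective_iff_map_eq_zero h).2 fun p hp => ?_,
    fun hh n => (map_eq_zero_iff h hh).trans (hfg n)⟩
  obtain ⟨n, rfl⟩ := hg p
  obtain ⟨m, rfl⟩ := (hfhg n).1 hp
  exact hfg.apply_apply_eq_zero m

theorem exact_lTensor_comp_iff_injective (L : Type*) [AddCommGroup L] [Module R L]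
    {f : M →ₗ[R] N} {g : N →ₗ[R] P} (h : P →ₗ[R] Q) (hfg : Function.Exact f g)
    (hg : Function.Surjective g) :
    Function.Exact (f.lTensor L) ((h ∘ₗ g).lTensor L) ↔ Function.Injective (h.lTensor L) := by
  rw [lTensor_comp]
  exact exact_comp_iff_injective _ (lTensor_exact L hfg hg) (lTensor_surjective L hg)

theorem lTensor_comap_subtype_injective (L : Type*) [AddCommGroup L] [Module R L]
    {f : M →ₗ[R] N} (hf : Function.Surjective f) {K : Submodule R N}
    (hker : Function.Injective ((ker f).subtype.lTensor L))
    (hK : Function.Injective (K.subtype.lTensor L)) :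
    Function.Injective ((K.comap f).subtype.lTensor L) := by
  let i : ker f →ₗ[R] K.comap f := Submodule.inclusion (ker_le_comap f)
  let r : K.comap f →ₗ[R] K := f.restrict fun _ hx => hx
  have hir : Function.Exact i r := fun x => by
    simp [i, r, Subtype.ext_iff, Submodule.inclusion]
  have hr : Function.Surjective r := fun ⟨y, hy⟩ => by
    obtain ⟨x, rfl⟩ := hf y
    exact ⟨⟨x, hy⟩, rfl⟩
  have hri : K.subtype ∘ₗ r = f ∘ₗ (K.comap f).subtype := rfl
  have hi : (K.comap f).subtype ∘ₗ i = (ker f).subtype := rfl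
  refine (injective_iff_map_eq_zero _).2 fun x hx => ?_
  have hrx : r.lTensor L x = 0 := hK <| by
    rw [← comp_apply, ← lTensor_comp, hri, lTensor_comp, comp_apply, hx, map_zero, map_zero]
  obtain ⟨y, rfl⟩ := (lTensor_exact L hir hr x).1 hrx
  have hy : (ker f).subtype.lTensor L y = 0 := by
    rwa [← hi, lTensor_comp, comp_apply]
  rw [hker (hy.trans (map_zero _).symm), map_zero]

end LinearMap

theorem Algebra.lTensor_range_linearMap_subtype_injective (A B : Type*) [CommRing A] [CommRing B]
    [Algebra A B] :
    Function.Injective ((LinearMap.range (Algebra.linearMap A B)).subtype.lTensor B) := by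
  set L := LinearMap.range (Algebra.linearMap A B)
  let one : L := ⟨1, 1, map_one (algebraMap A B)⟩
  let retraction : B →ₗ[A] B ⊗[A] L := (TensorProduct.mk A B L).flip one
  have h : ∀ x, retraction (LinearMap.mul' A B (L.subtype.lTensor B x)) = x := by
    intro x
    induction x using TensorProduct.induction_on with
    | zero => simp
    | tmul b y =>
      obtain ⟨_, a, rfl⟩ := y
      have hy : (⟨algebraMap A B a, a, rfl⟩ : L) = a • one :=
        Subtype.ext (Algebra.algebraMap_eq_smul_one a)
      simp [retraction, one, hy, TensorProduct.tmul_smul, TensorProduct.smul_tmul',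
        Algebra.smul_def, mul_comm]
    | add x y hx hy => simp only [map_add, hx, hy]
  exact Function.LeftInverse.injective (g := fun z => retraction (LinearMap.mul' A B z)) h

theorem isZero_Tor_one_iff_injective_lTensor {A : Type u} [CommRing A]
    (N : Type u) [AddCommGroup N] [Module A N] {P M : Type u} [AddCommGroup P] [Module A P]
    [Module.Projective A P] [AddCommGroup M] [Module A M] {f : P →ₗ[A] M}
    (hf : Function.Surjective f) :
    IsZero (((Tor (ModuleCat.{u} A) 1).obj (ModuleCat.of A N)).obj (ModuleCat.of A M)) ↔
      Function.Injective ((LinearMap.ker f).subtype.lTensor N) := by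
  let Q := ProjectiveResolution.of (ModuleCat.of A (LinearMap.ker f))
  let R : ProjectiveResolution (ModuleCat.of A M) :=
    ProjectiveResolution.ofShortExact (LinearMap.shortExact_shortComplexKer hf) Q
  rw [Tor_obj, (R.isoLeftDerivedObj _ 1).isZero_iff, HomologicalComplex.homologyFunctor_obj,
    ← HomologicalComplex.exactAt_iff_isZero_homology,
    HomologicalComplex.exactAt_iff' _ 2 1 0 (by simp) (by simp),
    ShortComplex.ShortExact.moduleCat_exact_iff_function_exact]
  have hQ : Function.Exact (Q.complex.d 1 0).hom (Q.π.f 0).hom :=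
    (ShortComplex.ShortExact.moduleCat_exact_iff_function_exact _).1 Q.exact₀
  have hπ : Function.Surjective (Q.π.f 0).hom := (ModuleCat.epi_iff_surjective _).1 inferInstance
  exact LinearMap.exact_lTensor_comp_iff_injective N (LinearMap.ker f).subtype hQ hπ

theorem Tor_one_coker_eq_zero_general {A B : Type u} [CommRing A] [CommRing B] [Algebra A B]
    (hTor : IsZero (((Tor (ModuleCat.{u} A) 1).obj (ModuleCat.of A B)).obj (ModuleCat.of A B))) :
    IsZero (((Tor (ModuleCat.{u} A) 1).obj (ModuleCat.of A B)).obj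
      (ModuleCat.of A (B ⧸ LinearMap.range (Algebra.linearMap A B)))) := by
  set L := LinearMap.range (Algebra.linearMap A B)
  have hp := Finsupp.linearCombination_id_surjective A B
  have hq : Function.Surjective (L.mkQ ∘ₗ Finsupp.linearCombination A id) :=
    L.mkQ_surjective.comp hp
  rw [isZero_Tor_one_iff_injective_lTensor B hq, LinearMap.ker_comp, Submodule.ker_mkQ]
  exact LinearMap.lTensor_comap_subtype_injective B hp
    ((isZero_Tor_one_iff_injective_lTensor B hp).1 hTor)
    (Algebra.lTensor_range_linearMap_subtype_injective A B)

/-- If `f : A → B` is a ring epimorphism with `Tor₁^A(B, B) = 0`, then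
`Tor₁^A(B, coker(f)) = 0`, where `coker(f) = B / f(A)`. -/
theorem Tor_one_coker_eq_zero {A B : Type u} [CommRing A] [CommRing B] [Algebra A B]
    (h : IsRingEpi (algebraMap A B))
    (hTor : IsZero (((Tor (ModuleCat.{u} A) 1).obj (ModuleCat.of A B)).obj (ModuleCat.of A B))) :
    IsZero (((Tor (ModuleCat.{u} A) 1).obj (ModuleCat.of A B)).obj
      (ModuleCat.of A (B ⧸ LinearMap.range (Algebra.linearMap A B)))) :=
  Tor_one_coker_eq_zero_general hTor
end

section
/- If there is a quasi-isomorphism from a two-term complex P⁻¹ →g P⁰ of projective left A-modules to the complex K_f = (A →f B), then there is a short exact sequence 0 → P⁻¹ → A ⊕ P⁰ → B → 0 of left A-modules; in particular B has projective dimension at most one as a left A-module. -/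
/-- A morphism of two-term complexes `(P⁻¹ →g P⁰) ⟶ (M →f N)`, given by components
`π₂` (degree `-1`) and `π₁` (degree `0`), is a quasi-isomorphism: it commutes with the
differentials and induces isomorphisms on `H⁻¹` (kernels) and `H⁰` (cokernels). -/
def IsTwoTermQuasiIso {A P Q M N : Type*} [Ring A]
    [AddCommGroup P] [AddCommGroup Q] [AddCommGroup M] [AddCommGroup N]
    [Module A P] [Module A Q] [Module A M] [Module A N]
    (g : P →ₗ[A] Q) (f : M →ₗ[A] N) (π₂ : P →ₗ[A] M) (π₁ : Q →ₗ[A] N) : Prop :=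
  f.comp π₂ = π₁.comp g ∧
  Submodule.map π₂ (LinearMap.ker g) = LinearMap.ker f ∧
  (∀ x ∈ LinearMap.ker g, π₂ x = 0 → x = 0) ∧
  (∀ n : N, ∃ q : Q, n - π₁ q ∈ LinearMap.range f) ∧
  (∀ q : Q, π₁ q ∈ LinearMap.range f → q ∈ LinearMap.range g)

/-!
The sequence `0 → P⁻¹ → A ⊕ P⁰ → B → 0` is the mapping cone of the morphism `(π₂, π₁)` of
two-term complexes, and the mapping cone of a quasi-isomorphism is acyclic. For two-term
complexes this is a direct diagram chase: injectivity on `H⁻¹` gives injectivity at `P⁻¹`,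
surjectivity on `H⁰` gives surjectivity onto `B`, and injectivity on `H⁰` together with
surjectivity on `H⁻¹` gives exactness in the middle.
-/

namespace IsTwoTermQuasiIso

variable {R P Q M N : Type*} [Ring R]
  [AddCommGroup P] [AddCommGroup Q] [AddCommGroup M] [AddCommGroup N]
  [Module R P] [Module R Q] [Module R M] [Module R N]
  {g : P →ₗ[R] Q} {f : M →ₗ[R] N} {π₂ : P →ₗ[R] M} {π₁ : Q →ₗ[R] N}

theorem injective_prod (h : IsTwoTermQuasiIso g f π₂ π₁) :
    Function.Injective (π₂.prod g) := by
  rw [← LinearMap.ker_eq_bot, LinearMap.ker_prod, eq_bot_iff]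
  rintro x ⟨hπ₂x, hgx⟩
  exact h.2.2.1 x hgx hπ₂x

theorem surjective_sub (h : IsTwoTermQuasiIso g f π₂ π₁) :
    Function.Surjective (f.comp (LinearMap.fst R M Q) - π₁.comp (LinearMap.snd R M Q)) := by
  intro n
  obtain ⟨q, m, hm⟩ := h.2.2.2.1 n
  refine ⟨(m, -q), ?_⟩
  simp [hm]

theorem exact_prod_sub (h : IsTwoTermQuasiIso g f π₂ π₁) :
    Function.Exact (π₂.prod g) (f.comp (LinearMap.fst R M Q) - π₁.comp (LinearMap.snd R M Q)) := by
  obtain ⟨hcomm, hker, -, -, hlift⟩ := h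
  have hcomm' (x : P) : f (π₂ x) = π₁ (g x) := LinearMap.congr_fun hcomm x
  rintro ⟨m, q⟩
  simp only [LinearMap.sub_apply, LinearMap.coe_comp, Function.comp_apply,
    LinearMap.fst_apply, LinearMap.snd_apply, sub_eq_zero]
  constructor
  · intro hmq
    obtain ⟨p, rfl⟩ := hlift q ⟨m, hmq⟩
    have hdiff : m - π₂ p ∈ LinearMap.ker f := by
      simp [LinearMap.mem_ker, hmq, hcomm']
    rw [← hker] at hdiff
    obtain ⟨k, hk, hπ₂k⟩ := hdiff
    refine ⟨p + k, ?_⟩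
    simp [LinearMap.mem_ker.mp hk, hπ₂k]
  · rintro ⟨x, hx⟩
    obtain ⟨rfl, rfl⟩ := Prod.mk.inj hx
    exact hcomm' x

end IsTwoTermQuasiIso

theorem ses_of_twoTermQuasiIso_general {A B Pm1 P0 : Type*} [Ring A] [Ring B]
    [Module A B]
    (fl : A →ₗ[A] B)
    [AddCommGroup Pm1] [AddCommGroup P0] [Module A Pm1] [Module A P0]
    (g : Pm1 →ₗ[A] P0) (π₂ : Pm1 →ₗ[A] A) (π₁ : P0 →ₗ[A] B)
    (hqis : IsTwoTermQuasiIso g fl π₂ π₁) :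
    Function.Injective (LinearMap.prod π₂ g) ∧
      Function.Exact (LinearMap.prod π₂ g)
        (fl.comp (LinearMap.fst A A P0) - π₁.comp (LinearMap.snd A A P0)) ∧
      Function.Surjective (fl.comp (LinearMap.fst A A P0) - π₁.comp (LinearMap.snd A A P0)) :=
  ⟨hqis.injective_prod, hqis.exact_prod_sub, hqis.surjective_sub⟩

/-- Let `f : A → B` be a ring epimorphism (with `B` an `A`-module via `f`).
If there is a quasi-isomorphism `(π₂, π₁)` from a two-term complex `P⁻¹ →g P⁰` of projective
left `A`-modules to `K_f = (A →f B)`, then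
`0 → P⁻¹ → A ⊕ P⁰ → B → 0`, with maps `x ↦ (π₂ x, g x)` and `(y, z) ↦ f y - π₁ z`,
is a short exact sequence of left `A`-modules; in particular (as `A ⊕ P⁰` is projective)
`B` has projective dimension at most one. -/
theorem ses_of_twoTermQuasiIso {A B Pm1 P0 : Type*} [Ring A] [Ring B] (f : A →+* B)
    [Module A B] (hsmul : ∀ (a : A) (b : B), a • b = f a * b)
    (fl : A →ₗ[A] B) (hfl : ∀ a : A, fl a = f a)
    (hepi : IsRingEpi f)
    [AddCommGroup Pm1] [AddCommGroup P0] [Module A Pm1] [Module A P0]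
    [Module.Projective A Pm1] [Module.Projective A P0]
    (g : Pm1 →ₗ[A] P0) (π₂ : Pm1 →ₗ[A] A) (π₁ : P0 →ₗ[A] B)
    (hqis : IsTwoTermQuasiIso g fl π₂ π₁) :
    Function.Injective (LinearMap.prod π₂ g) ∧
      Function.Exact (LinearMap.prod π₂ g)
        (fl.comp (LinearMap.fst A A P0) - π₁.comp (LinearMap.snd A A P0)) ∧
      Function.Surjective (fl.comp (LinearMap.fst A A P0) - π₁.comp (LinearMap.snd A A P0)) :=
  ses_of_twoTermQuasiIso_general fl g π₂ π₁ hqis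
end

section
/- Let A be a finite dimensional algebra over a field K and f : A → B a surjective homological ring epimorphism. Then ker(f) is an idempotent ideal, hence ker(f) = AeA for some idempotent e ∈ A; in particular B ≅ A/AeA. -/
universe u

open CategoryTheory CategoryTheory.Limits

/-!
Write `I` for the kernel of `A → B`, so `B = A ⧸ I`, and resolve `B` starting from `A` itself:
`⋯ → P₂ → P₁ → A → B`, so that `d₁ : P₁ → A` has image `I`. The vanishing of `Tor₁(B, B)` makes
`B ⊗ P₂ → B ⊗ P₁ → B ⊗ A` exact. For `x = d₁ p ∈ I`, the element `1 ⊗ p` dies in `B ⊗ A = B`,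
so it comes from `B ⊗ P₂`; as `d₁ : P₁ → I` kills the image of `P₂`, this gives `1 ⊗ x = 0` in
`B ⊗ I = I ⧸ I²`. Hence `I = I²`, and a finitely generated idempotent ideal of a commutative ring
is generated by an idempotent element.
-/

noncomputable section

namespace ModuleCat

variable {R : Type u} [Ring R] {P X : ModuleCat.{u} R} (π : P ⟶ X)

def resolutionComplexOfEpi : ChainComplex (ModuleCat.{u} R) ℕ :=
  ChainComplex.mk' P (Projective.syzygies π) (Projective.d π)
    (fun f => ⟨_, Projective.d f, (Category.assoc _ _ _).trans
      ((whisker_eq _ (kernel.condition _)).trans comp_zero)⟩)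

lemma resolutionComplexOfEpi_d_1_0 : (resolutionComplexOfEpi π).d 1 0 = Projective.d π := by
  simp [resolutionComplexOfEpi]

lemma resolutionComplexOfEpi_exactAt_succ (n : ℕ) :
    (resolutionComplexOfEpi π).ExactAt (n + 1) := by
  rw [HomologicalComplex.exactAt_iff' _ (n + 1 + 1) (n + 1) n (by simp) (by simp)]
  dsimp [resolutionComplexOfEpi, HomologicalComplex.sc', HomologicalComplex.shortComplexFunctor',
    ChainComplex.mk', ChainComplex.mk]
  match n with
  | 0 => apply exact_d_f
  | n + 1 =>
    dsimp [ChainComplex.of.d]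
    simp only [↓reduceIte]
    apply exact_d_f

instance [Projective P] (n : ℕ) : Projective ((resolutionComplexOfEpi π).X n) := by
  obtain (_ | _ | _ | n) := n
  · exact ‹Projective P›
  all_goals apply Projective.projective_over

def projectiveResolutionOfEpi [Projective P] [Epi π] : ProjectiveResolution X where
  complex := resolutionComplexOfEpi π
  π := (ChainComplex.toSingle₀Equiv _ _).symm ⟨π, by
    rw [resolutionComplexOfEpi_d_1_0]
    exact (Category.assoc _ _ _).trans ((whisker_eq _ (kernel.condition _)).trans comp_zero)⟩
  quasiIso := ⟨fun n => by
    cases n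
    · rw [ChainComplex.quasiIsoAt₀_iff, ShortComplex.quasiIso_iff_of_zeros']
      · refine (ShortComplex.exact_and_epi_g_iff_of_iso ?_).2
          ⟨exact_d_f π, by dsimp; infer_instance⟩
        exact ShortComplex.isoMk (Iso.refl _) (Iso.refl _) (Iso.refl _)
          (by simp [resolutionComplexOfEpi]; rfl) (by simp; rfl)
      all_goals rfl
    · rw [quasiIsoAt_iff_exactAt']
      · apply resolutionComplexOfEpi_exactAt_succ
      · apply ChainComplex.exactAt_succ_single_obj⟩

end ModuleCat

namespace CategoryTheory.ProjectiveResolution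

open MonoidalCategory

variable {C : Type*} [Category* C] [MonoidalCategory C] [Abelian C] [MonoidalPreadditive C]
  [HasProjectiveResolutions C] {X Y : C}

lemma exact_whiskerLeft_of_isZero_Tor (P : ProjectiveResolution Y) (n : ℕ)
    (h : IsZero (((Tor C (n + 1)).obj X).obj Y)) :
    (ShortComplex.mk (X ◁ P.complex.d (n + 2) (n + 1)) (X ◁ P.complex.d (n + 1) n)
      (by simp [← whiskerLeft_comp])).Exact := by
  let F := (tensoringLeft C).obj X
  have hexact : ((F.mapHomologicalComplex _).obj P.complex).ExactAt (n + 1) :=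
    (HomologicalComplex.exactAt_iff_isZero_homology _ _).2
      (h.of_iso (P.isoLeftDerivedObj F _).symm)
  exact (HomologicalComplex.exactAt_iff' _ (n + 2) (n + 1) n (by simp) (by simp)).1 hexact

end CategoryTheory.ProjectiveResolution

section

open TensorProduct

variable {A B : Type*} [CommRing A] [CommRing B] [Algebra A B]

lemma mem_ker_algebraMap_smul_top_of_one_tmul_eq_zero
    (hsurj : Function.Surjective (algebraMap A B)) {N : Type*} [AddCommGroup N] [Module A N]
    {n : N} (hn : (1 : B) ⊗ₜ[A] n = 0) :
    n ∈ RingHom.ker (algebraMap A B) • (⊤ : Submodule A N) := by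
  let e := Ideal.quotientKerAlgEquivOfSurjective (f := Algebra.ofId A B) hsurj
  have h : (1 : A ⧸ RingHom.ker (Algebra.ofId A B)) ⊗ₜ[A] n = 0 := by
    simpa using congrArg (e.toLinearEquiv.rTensor N).symm hn
  have hmk := congrArg (quotTensorEquivQuotSMul N _) h
  rw [quotTensorEquivQuotSMul_mk_one_tmul, map_zero, Submodule.Quotient.mk_eq_zero] at hmk
  exact hmk

lemma ker_algebraMap_le_sq_of_exact_lTensor
    (hsurj : Function.Surjective (algebraMap A B)) {M₁ M₂ : Type*} [AddCommGroup M₁] [Module A M₁]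
    [AddCommGroup M₂] [Module A M₂] (f : M₁ →ₗ[A] A) (g : M₂ →ₗ[A] M₁)
    (hf : LinearMap.range f = RingHom.ker (algebraMap A B)) (hfg : f ∘ₗ g = 0)
    (hexact : LinearMap.ker (f.lTensor B) ≤ LinearMap.range (g.lTensor B)) :
    RingHom.ker (algebraMap A B) ≤ RingHom.ker (algebraMap A B) ^ 2 := by
  set I := RingHom.ker (algebraMap A B)
  intro x hx
  obtain ⟨p, rfl⟩ : x ∈ LinearMap.range f := hf ▸ hx
  let ψ : M₁ →ₗ[A] I := f.codRestrict I fun m => hf ▸ LinearMap.mem_range_self f m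
  have hψg : ψ ∘ₗ g = 0 := by
    ext m
    exact congrArg (fun h => h m) hfg
  have hp : (1 : B) ⊗ₜ[A] p ∈ LinearMap.ker (f.lTensor B) := by
    refine (TensorProduct.rid A B).injective ?_
    simpa [Algebra.smul_def] using RingHom.mem_ker.1 hx
  obtain ⟨s, hs⟩ := hexact hp
  have hψp : (1 : B) ⊗ₜ[A] ψ p = 0 := by
    rw [← LinearMap.lTensor_tmul, ← hs, ← LinearMap.comp_apply, ← LinearMap.lTensor_comp, hψg,
      LinearMap.lTensor_zero, LinearMap.zero_apply]
  exact (I.toCotangent_eq_zero (ψ p)).1 ((Submodule.Quotient.mk_eq_zero _).2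
    (mem_ker_algebraMap_smul_top_of_one_tmul_eq_zero hsurj hψp))

end

theorem ker_algebraMap_le_sq_of_isZero_Tor_one {A B : Type u} [CommRing A] [CommRing B]
    [Algebra A B] (hsurj : Function.Surjective (algebraMap A B))
    (htor : IsZero (((Tor (ModuleCat.{u} A) 1).obj (ModuleCat.of A B)).obj (ModuleCat.of A B))) :
    RingHom.ker (algebraMap A B) ≤ RingHom.ker (algebraMap A B) ^ 2 := by
  have : Epi (ModuleCat.ofHom (Algebra.linearMap A B)) := (ModuleCat.epi_iff_surjective _).2 hsurj
  let P := ModuleCat.projectiveResolutionOfEpi (ModuleCat.ofHom (Algebra.linearMap A B))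
  exact ker_algebraMap_le_sq_of_exact_lTensor hsurj (P.complex.d 1 0).hom (P.complex.d 2 1).hom
    P.exact₀.moduleCat_range_eq_ker (congrArg ModuleCat.Hom.hom (P.complex.d_comp_d 2 1 0))
    ((ShortComplex.moduleCat_exact_iff_ker_sub_range _).1
      (P.exact_whiskerLeft_of_isZero_Tor 0 htor))

end

theorem ker_of_surjective_homological_is_stratifying_general {K A B : Type u} [Field K] [CommRing A]
    [Algebra K A] [FiniteDimensional K A] [CommRing B] [Algebra A B]
    (hsurj : Function.Surjective (algebraMap A B))
    (htor : ∀ i : ℕ, 0 < i →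
      IsZero (((Tor (ModuleCat.{u} A) i).obj (ModuleCat.of A B)).obj (ModuleCat.of A B))) :
    RingHom.ker (algebraMap A B) * RingHom.ker (algebraMap A B)
        = RingHom.ker (algebraMap A B) ∧
      ∃ e : A, e * e = e ∧ RingHom.ker (algebraMap A B) = Ideal.span {e} ∧
        Nonempty ((A ⧸ Ideal.span ({e} : Set A)) ≃+* B) := by
  set I := RingHom.ker (algebraMap A B)
  have hle : I ≤ I ^ 2 := ker_algebraMap_le_sq_of_isZero_Tor_one hsurj (htor 1 one_pos)
  have hidem : I * I = I := le_antisymm Ideal.mul_le_left (sq I ▸ hle)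
  have : IsNoetherianRing A := IsNoetherianRing.of_finite K A
  obtain ⟨e, he, hIe⟩ := (I.isIdempotentElem_iff_of_fg (IsNoetherian.noetherian I)).1 hidem
  exact ⟨hidem, e, he, hIe,
    ⟨(Ideal.quotEquivOfEq hIe.symm).trans (RingHom.quotientKerEquivOfSurjective hsurj)⟩⟩

/-- Let `A` be a finite dimensional algebra over a field `K` and
`f : A → B` a surjective homological ring epimorphism (`Tor_i^A(B,B) = 0` for all `i > 0`).
Then `ker(f)` is an idempotent ideal, hence `ker(f) = AeA` for some idempotent `e ∈ A`;
in particular `B ≅ A/AeA`. -/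
theorem ker_of_surjective_homological_is_stratifying {K A B : Type u} [Field K] [CommRing A]
    [Algebra K A] [FiniteDimensional K A] [CommRing B] [Algebra A B]
    (hsurj : Function.Surjective (algebraMap A B))
    (hepi : IsRingEpi (algebraMap A B))
    (htor : ∀ i : ℕ, 0 < i →
      IsZero (((Tor (ModuleCat.{u} A) i).obj (ModuleCat.of A B)).obj (ModuleCat.of A B))) :
    RingHom.ker (algebraMap A B) * RingHom.ker (algebraMap A B)
        = RingHom.ker (algebraMap A B) ∧
      ∃ e : A, e * e = e ∧ RingHom.ker (algebraMap A B) = Ideal.span {e} ∧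
        Nonempty ((A ⧸ Ideal.span ({e} : Set A)) ≃+* B) :=
  ker_of_surjective_homological_is_stratifying_general (K := K) hsurj htor
end

section
/- Let f : A → B be a ring epimorphism and P⁻¹ →g P⁰ a two-term complex of finitely generated projective left A-modules quasi-isomorphic to K_f = (A →f B). If B ⊗[A] g is an isomorphism (for instance if f is homological), then Tor_1^A(A_{g}, coker(f)) = 0, where A_{g} is the universal localisation of A at g. -/
universe u

open CategoryTheory CategoryTheory.Limits
open scoped TensorProduct

/-- A ring homomorphism `h : A → C` *inverts* a map `g` of `A`-modules if `C ⊗[A] g`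
(where `C` is an `A`-module via `h`) is an isomorphism. -/
def InvertsMap {A : Type u} [CommRing A] {P Q : Type u} [AddCommGroup P] [AddCommGroup Q]
    [Module A P] [Module A Q] (g : P →ₗ[A] Q) (C : Type u) [Ring C] (h : A →+* C) : Prop := by
  letI : Module A C := Module.compHom C h
  exact Function.Bijective (LinearMap.lTensor C g)

/-! Through the quasi-isomorphism, `P⁻¹ →g P⁰ → B/A → 0` is exact, so continuing `g` by syzygies
gives a projective resolution of `B/A` whose first differential is `g`. Tensoring with `A_{g}`
makes this differential injective, so the homology in degree one, which is `Tor₁`, vanishes. -/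

universe v

namespace CategoryTheory

variable {C : Type*} [Category.{v} C] [Abelian C] [EnoughProjectives C]

namespace ProjectiveResolution

noncomputable def syzygyStep {X₁ X₀ : C} (f : X₁ ⟶ X₀) :
    Σ' (X₂ : C) (d : X₂ ⟶ X₁), d ≫ f = 0 :=
  ⟨_, Projective.d f,
    (Category.assoc _ _ _).trans ((congrArg _ (kernel.condition f)).trans comp_zero)⟩

noncomputable def complexOfPresentation {P₁ P₀ : C} (g : P₁ ⟶ P₀) : ChainComplex C ℕ :=
  ChainComplex.mk' P₀ P₁ g syzygyStep

variable {P₁ P₀ Z : C}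

lemma complexOfPresentation_d_one_zero (g : P₁ ⟶ P₀) :
    (complexOfPresentation g).d 1 0 = g :=
  ChainComplex.mk'_d_1_0 _ _ _ _

instance [Projective P₁] [Projective P₀] (g : P₁ ⟶ P₀) (n : ℕ) :
    Projective ((complexOfPresentation g).X n) := by
  obtain (_ | _ | _ | n) := n
  · assumption
  · assumption
  all_goals apply Projective.projective_over

lemma complexOfPresentation_exactAt_succ (g : P₁ ⟶ P₀) (n : ℕ) :
    (complexOfPresentation g).ExactAt (n + 1) := by
  rw [HomologicalComplex.exactAt_iff' _ (n + 1 + 1) (n + 1) n (by simp) (by simp)]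
  refine (ShortComplex.exact_iff_of_iso ?_).2 (exact_d_f ((complexOfPresentation g).d (n + 1) n))
  refine ShortComplex.isoMk (ChainComplex.mk'XIso _ _ _ syzygyStep n) (Iso.refl _) (Iso.refl _)
    ?_ ?_
  · exact (ChainComplex.mk'_d _ _ _ _ n).symm.trans (Category.comp_id _).symm
  · exact (Category.id_comp _).trans (Category.comp_id _).symm

noncomputable def ofPresentation [Projective P₁] [Projective P₀] (g : P₁ ⟶ P₀) (p : P₀ ⟶ Z)
    (w : g ≫ p = 0) (hexact : (ShortComplex.mk g p w).Exact) [Epi p] :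
    ProjectiveResolution Z where
  complex := complexOfPresentation g
  π := (ChainComplex.toSingle₀Equiv _ _).symm
    ⟨p, by rw [complexOfPresentation_d_one_zero]; exact w⟩
  quasiIso := ⟨fun n => by
    cases n with
    | zero =>
      rw [ChainComplex.quasiIsoAt₀_iff, ShortComplex.quasiIso_iff_of_zeros']
      · refine (ShortComplex.exact_and_epi_g_iff_of_iso ?_).2 ⟨hexact, ‹Epi p›⟩
        -- The objects agree only after unfolding `ChainComplex.mk'`, which `simp` does not do.
        refine ShortComplex.isoMk (Iso.refl _) (Iso.refl _) (Iso.refl _) ?_ ?_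
        · exact (Category.id_comp g).trans
            ((complexOfPresentation_d_one_zero g).symm.trans (Category.comp_id _).symm)
        · exact (Category.id_comp p).trans
            ((ChainComplex.toSingle₀Equiv_symm_apply_f_zero (C := complexOfPresentation g) p
              _).symm.trans (Category.comp_id _).symm)
      all_goals rfl
    | succ n =>
      rw [quasiIsoAt_iff_exactAt' _ _ (ChainComplex.exactAt_succ_single_obj _ _)]
      exact complexOfPresentation_exactAt_succ g n⟩

lemma ofPresentation_complex_d_one_zero [Projective P₁] [Projective P₀] (g : P₁ ⟶ P₀)
    (p : P₀ ⟶ Z) (w : g ≫ p = 0) (hexact : (ShortComplex.mk g p w).Exact) [Epi p] :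
    (ofPresentation g p w hexact).complex.d 1 0 = g :=
  complexOfPresentation_d_one_zero g

end ProjectiveResolution

lemma Functor.isZero_leftDerived_one_of_mono {D : Type*} [Category D] [Abelian D]
    (F : C ⥤ D) [F.Additive] {Z : C} (P : ProjectiveResolution Z)
    [Mono (F.map (P.complex.d 1 0))] : IsZero ((F.leftDerived 1).obj Z) := by
  refine IsZero.of_iso ?_ (P.isoLeftDerivedObj F 1)
  rw [HomologicalComplex.homologyFunctor_obj, ← HomologicalComplex.exactAt_iff_isZero_homology,
    HomologicalComplex.exactAt_iff' _ 2 1 0 (by simp) (by simp)]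
  refine (ShortComplex.exact_iff_mono _ ?_).2 (by simpa)
  change F.map (P.complex.d 2 1) = 0
  rw [← cancel_mono (F.map (P.complex.d 1 0)), ← F.map_comp]
  simp

end CategoryTheory

theorem ModuleCat.isZero_Tor_one_of_injective_lTensor {A : Type u} [CommRing A]
    {P₁ P₀ M N : Type u} [AddCommGroup P₁] [AddCommGroup P₀] [AddCommGroup M] [AddCommGroup N]
    [Module A P₁] [Module A P₀] [Module A M] [Module A N]
    [Module.Projective A P₁] [Module.Projective A P₀]
    {g : P₁ →ₗ[A] P₀} {p : P₀ →ₗ[A] M} (hgp : Function.Exact g p) (hp : Function.Surjective p)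
    (hN : Function.Injective (g.lTensor N)) :
    IsZero (((Tor (ModuleCat.{u} A) 1).obj (ModuleCat.of A N)).obj (ModuleCat.of A M)) := by
  have : Projective (ModuleCat.of A P₁) := (IsProjective.iff_projective _).mp ‹_›
  have : Projective (ModuleCat.of A P₀) := (IsProjective.iff_projective _).mp ‹_›
  have : Epi (ModuleCat.ofHom p) := (ModuleCat.epi_iff_surjective _).2 hp
  let P := ProjectiveResolution.ofPresentation (ModuleCat.ofHom g) (ModuleCat.ofHom p)
    (by ext x; exact hgp.apply_apply_eq_zero x)
    ((ShortComplex.ShortExact.moduleCat_exact_iff_function_exact _).2 hgp)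
  have : Mono (((MonoidalCategory.tensoringLeft _).obj (ModuleCat.of A N)).map
      (P.complex.d 1 0)) := by
    rw [ProjectiveResolution.ofPresentation_complex_d_one_zero]
    exact (ModuleCat.mono_iff_injective _).2 hN
  exact Functor.isZero_leftDerived_one_of_mono _ P

section

variable {A P Q M N : Type*} [Ring A]
  [AddCommGroup P] [AddCommGroup Q] [AddCommGroup M] [AddCommGroup N]
  [Module A P] [Module A Q] [Module A M] [Module A N]
  {g : P →ₗ[A] Q} {f : M →ₗ[A] N} {π₂ : P →ₗ[A] M} {π₁ : Q →ₗ[A] N}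

lemma IsTwoTermQuasiIso.exact_mkQ_comp (h : IsTwoTermQuasiIso g f π₂ π₁) :
    Function.Exact g ((LinearMap.range f).mkQ ∘ₗ π₁) := by
  intro q
  rw [LinearMap.comp_apply, Submodule.mkQ_apply, Submodule.Quotient.mk_eq_zero]
  refine ⟨h.2.2.2.2 q, ?_⟩
  rintro ⟨p, rfl⟩
  exact ⟨π₂ p, LinearMap.congr_fun h.1 p⟩

lemma IsTwoTermQuasiIso.surjective_mkQ_comp (h : IsTwoTermQuasiIso g f π₂ π₁) :
    Function.Surjective ((LinearMap.range f).mkQ ∘ₗ π₁) := by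
  intro n
  obtain ⟨n, rfl⟩ := Submodule.mkQ_surjective _ n
  obtain ⟨q, hq⟩ := h.2.2.2.1 n
  exact ⟨q, ((Submodule.Quotient.eq _).2 hq).symm⟩

end

lemma InvertsMap.bijective_lTensor {A : Type u} [CommRing A] {P Q : Type u}
    [AddCommGroup P] [AddCommGroup Q] [Module A P] [Module A Q] {g : P →ₗ[A] Q}
    {L : Type u} [Ring L] [Algebra A L] (h : InvertsMap g L (algebraMap A L)) :
    Function.Bijective (g.lTensor L) := by
  have hmod : Module.compHom L (algebraMap A L) = Algebra.toModule :=
    Module.ext' _ _ fun r m => (Algebra.smul_def r m).symm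
  unfold InvertsMap at h
  rwa [hmod] at h

theorem Tor_one_universalLocalisation_coker_eq_zero_general {A B : Type u} [CommRing A] [CommRing B]
    [Algebra A B]
    {Pm1 P0 : Type u} [AddCommGroup Pm1] [AddCommGroup P0] [Module A Pm1] [Module A P0]
    [Module.Projective A Pm1] [Module.Projective A P0]
    (g : Pm1 →ₗ[A] P0) (π₂ : Pm1 →ₗ[A] A) (π₁ : P0 →ₗ[A] B)
    (hqis : IsTwoTermQuasiIso g (Algebra.linearMap A B) π₂ π₁)
    (L : Type u) [CommRing L] [Algebra A L]
    (hL : InvertsMap g L (algebraMap A L)) :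
    IsZero (((Tor (ModuleCat.{u} A) 1).obj (ModuleCat.of A L)).obj
      (ModuleCat.of A (B ⧸ LinearMap.range (Algebra.linearMap A B)))) :=
  ModuleCat.isZero_Tor_one_of_injective_lTensor hqis.exact_mkQ_comp hqis.surjective_mkQ_comp
    hL.bijective_lTensor.injective

/-- Let `f : A → B` be a ring epimorphism and `g : P⁻¹ → P⁰` a two-term
complex of finitely generated projective left `A`-modules quasi-isomorphic to
`K_f = (A →f B)`.  Assume `B ⊗[A] g` is an isomorphism (which holds, for instance, if `f` is
homological).  Let `L` (with the map `algebraMap A L`) be the universal localisation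
`A_{g}` of `A` at `g`; i.e. `algebraMap A L` inverts `g` and is initial among ring
homomorphisms inverting `g`.  Then `Tor₁^A(A_{g}, coker f) = 0` where `coker f = B/f(A)`. -/
theorem Tor_one_universalLocalisation_coker_eq_zero {A B : Type u} [CommRing A] [CommRing B]
    [Algebra A B]
    {Pm1 P0 : Type u} [AddCommGroup Pm1] [AddCommGroup P0] [Module A Pm1] [Module A P0]
    [Module.Finite A Pm1] [Module.Finite A P0]
    [Module.Projective A Pm1] [Module.Projective A P0]
    (g : Pm1 →ₗ[A] P0) (π₂ : Pm1 →ₗ[A] A) (π₁ : P0 →ₗ[A] B)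
    (hepi : IsRingEpi (algebraMap A B))
    (hqis : IsTwoTermQuasiIso g (Algebra.linearMap A B) π₂ π₁)
    (hinv : Function.Bijective (LinearMap.lTensor B g))
    (L : Type u) [CommRing L] [Algebra A L]
    (hL : InvertsMap g L (algebraMap A L))
    (hLuniv : ∀ (C : Type u) [Ring C] (h : A →+* C), InvertsMap g C h →
      ∃! k : L →+* C, k.comp (algebraMap A L) = h) :
    IsZero (((Tor (ModuleCat.{u} A) 1).obj (ModuleCat.of A L)).obj
      (ModuleCat.of A (B ⧸ LinearMap.range (Algebra.linearMap A B)))) :=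
  Tor_one_universalLocalisation_coker_eq_zero_general g π₂ π₁ hqis L hL
end
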